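/- Let L : R^p → R be nonnegative with minimum value L* on a set S, and suppose at iterate θ_t ∈ S the restricted strong convexity inequality L(θ') ≥ L(θ_t) + ⟨θ'−θ_t, ∇L(θ_t)⟩ + (α/2)‖θ'−θ_t‖₂² holds for all θ' in a set B_t containing θ_{t+1} and a minimizer θ̄_{t+1} of L over B_t, and the smoothness inequality L(θ') ≤ L(θ_t) + ⟨θ'−θ_t, ∇L(θ_t)⟩ + (β/2)‖θ'−θ_t‖₂² holds for all θ', with 0 < α < β. If θ_{t+1} = θ_t − (ω/β)∇L(θ_t) with ω ∈ (0,2) and γ_t := (L(θ̄_{t+1}) − L*)/(L(θ_t) − L*) ∈ [0,1), then L(θ_{t+1}) − L* ≤ (1 − (α/β)·ω(1−γ_t)(2−ω))·(L(θ_t) − L*). -/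

import Mathlib

/-! Smoothness turns the step `θ_t - (ω/β) g` into the descent
`L θ_{t+1} ≤ L θ_t - (ω/β)(1 - ω/2)‖g‖²`, while the RSC lower bound at `θ̄_{t+1}`, minimised
over `θ'`, gives the Polyak–Łojasiewicz type bound `‖g‖² ≥ 2α (L θ_t - L θ̄_{t+1})
= 2α (1 - γ_t)(L θ_t - L*)`. -/

section GradientStep

variable {E : Type*} [NormedAddCommGroup E] [InnerProductSpace ℝ E]

open RealInnerProductSpace

lemma neg_norm_sq_div_le_inner_add_mul_norm_sq {α : ℝ} (hα : 0 < α) (v g : E) :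
    -(‖g‖ ^ 2 / (2 * α)) ≤ ⟪v, g⟫ + (α / 2) * ‖v‖ ^ 2 := by
  -- complete the square: `‖α • v + g‖² ≥ 0`
  have hsq : 0 ≤ α ^ 2 * ‖v‖ ^ 2 + 2 * (α * ⟪v, g⟫) + ‖g‖ ^ 2 := by
    have := sq_nonneg ‖α • v + g‖
    rwa [norm_add_sq_real, real_inner_smul_left, norm_smul, mul_pow, Real.norm_eq_abs,
      sq_abs] at this
  have hid : (α ^ 2 * ‖v‖ ^ 2 + 2 * (α * ⟪v, g⟫) + ‖g‖ ^ 2) / (2 * α) =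
      ⟪v, g⟫ + α / 2 * ‖v‖ ^ 2 + ‖g‖ ^ 2 / (2 * α) := by
    field_simp
    ring
  have := div_nonneg hsq (by positivity : (0 : ℝ) ≤ 2 * α)
  rw [hid] at this
  linarith

lemma two_mul_sub_le_norm_sq_of_lower_quadratic {f : E → ℝ} {x y g : E} {α : ℝ} (hα : 0 < α)
    (hy : f x + ⟪y - x, g⟫ + (α / 2) * ‖y - x‖ ^ 2 ≤ f y) :
    2 * α * (f x - f y) ≤ ‖g‖ ^ 2 := by
  have h := neg_norm_sq_div_le_inner_add_mul_norm_sq hα (y - x) g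
  have h2α : 0 < 2 * α := by positivity
  have : f x - f y ≤ ‖g‖ ^ 2 / (2 * α) := by linarith
  rwa [le_div_iff₀ h2α, mul_comm] at this

lemma le_sub_of_upper_quadratic_of_step {f : E → ℝ} {x g : E} {β ω : ℝ} (hβ : β ≠ 0)
    (hx : f (x - (ω / β) • g) ≤
      f x + ⟪x - (ω / β) • g - x, g⟫ + (β / 2) * ‖x - (ω / β) • g - x‖ ^ 2) :
    f (x - (ω / β) • g) ≤ f x - (ω / β) * (1 - ω / 2) * ‖g‖ ^ 2 := by
  rw [sub_sub_cancel_left, inner_neg_left, real_inner_smul_left, real_inner_self_eq_norm_sq,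
    norm_neg, norm_smul, mul_pow, Real.norm_eq_abs, sq_abs] at hx
  have hid : (β / 2) * ((ω / β) ^ 2 * ‖g‖ ^ 2) = (ω / β) * (ω / 2) * ‖g‖ ^ 2 := by
    field_simp
  linarith

end GradientStep

theorem rsc_loss_reduction_general
    (p : ℕ) (L : EuclideanSpace ℝ (Fin p) → ℝ)
    (Bt : Set (EuclideanSpace ℝ (Fin p)))
    (Lstar : ℝ)
    (θt θt1 θbar : EuclideanSpace ℝ (Fin p))
    (hθbarB : θbar ∈ Bt)
    (α β ω : ℝ) (hα : 0 < α) (hαβ : α < β)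
    (hω : 0 < ω) (hω2 : ω < 2)
    (hRSC : ∀ θ' ∈ Bt,
      L θt + (inner ℝ (θ' - θt) (gradient L θt) : ℝ) + (α / 2) * ‖θ' - θt‖ ^ 2 ≤ L θ')
    (hSmooth : ∀ θ' : EuclideanSpace ℝ (Fin p),
      L θ' ≤ L θt + (inner ℝ (θ' - θt) (gradient L θt) : ℝ) + (β / 2) * ‖θ' - θt‖ ^ 2)
    (hStep : θt1 = θt - (ω / β) • gradient L θt)
    (hgt : Lstar < L θt)
    (γ : ℝ) (hγdef : γ = (L θbar - Lstar) / (L θt - Lstar)) :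
    L θt1 - Lstar ≤ (1 - (α / β) * ω * (1 - γ) * (2 - ω)) * (L θt - Lstar) := by
  set g := gradient L θt
  have hβ : 0 < β := hα.trans hαβ
  have hgap : 0 < L θt - Lstar := sub_pos.mpr hgt
  have hdescent : L θt1 ≤ L θt - (ω / β) * (1 - ω / 2) * ‖g‖ ^ 2 := by
    rw [hStep]
    exact le_sub_of_upper_quadratic_of_step hβ.ne' (hSmooth _)
  have hPL : 2 * α * ((1 - γ) * (L θt - Lstar)) ≤ ‖g‖ ^ 2 := by
    have hbar : L θt - L θbar = (1 - γ) * (L θt - Lstar) := by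
      rw [hγdef]
      field_simp
      ring
    rw [← hbar]
    exact two_mul_sub_le_norm_sq_of_lower_quadratic hα (hRSC θbar hθbarB)
  have hrate : 0 ≤ (ω / β) * (1 - ω / 2) := mul_nonneg (by positivity) (by linarith)
  calc L θt1 - Lstar
      ≤ (L θt - Lstar) - (ω / β) * (1 - ω / 2) * (2 * α * ((1 - γ) * (L θt - Lstar))) := by
        linarith [mul_le_mul_of_nonneg_left hPL hrate]
    _ = (1 - (α / β) * ω * (1 - γ) * (2 - ω)) * (L θt - Lstar) := by
        field_simp

/-- RSC + smoothness imply a linear decrease of the excess empirical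
loss under the gradient descent step θ_{t+1} = θ_t − (ω/β)∇L(θ_t). -/
theorem rsc_loss_reduction
    (p : ℕ) (L : EuclideanSpace ℝ (Fin p) → ℝ)
    (hLnonneg : ∀ θ, 0 ≤ L θ)
    (S Bt : Set (EuclideanSpace ℝ (Fin p)))
    (Lstar : ℝ) (hLstar : ∀ θ ∈ S, Lstar ≤ L θ)
    (θt θt1 θbar : EuclideanSpace ℝ (Fin p))
    (hθtS : θt ∈ S) (hθt1B : θt1 ∈ Bt) (hθbarB : θbar ∈ Bt)
    (hθbarMin : ∀ θ' ∈ Bt, L θbar ≤ L θ')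
    (α β ω : ℝ) (hα : 0 < α) (hαβ : α < β)
    (hω : 0 < ω) (hω2 : ω < 2)
    (hRSC : ∀ θ' ∈ Bt,
      L θt + (inner ℝ (θ' - θt) (gradient L θt) : ℝ) + (α / 2) * ‖θ' - θt‖ ^ 2 ≤ L θ')
    (hSmooth : ∀ θ' : EuclideanSpace ℝ (Fin p),
      L θ' ≤ L θt + (inner ℝ (θ' - θt) (gradient L θt) : ℝ) + (β / 2) * ‖θ' - θt‖ ^ 2)
    (hStep : θt1 = θt - (ω / β) • gradient L θt)
    (hgt : Lstar < L θt)
    (γ : ℝ) (hγdef : γ = (L θbar - Lstar) / (L θt - Lstar))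
    (hγ0 : 0 ≤ γ) (hγ1 : γ < 1) :
    L θt1 - Lstar ≤ (1 - (α / β) * ω * (1 - γ) * (2 - ω)) * (L θt - Lstar) :=
  rsc_loss_reduction_general p L Bt Lstar θt θt1 θbar hθbarB α β ω hα hαβ hω hω2 hRSC hSmooth hStep
    hgt γ hγdef
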